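/- arXiv:1010.5878 — 4 statements merged into one kernel-verified Lean document; each statement's English description precedes it below -/
import Mathlib

section
/- Let $A$ be a commutative ring, $K$ and $J$ ideals of $A$, $a \in A$, and $Q$ an $A$-module with a homomorphism $\phi_2 : Q \to K$. Suppose $J = K + Aa$, $\phi_2(Q) + K^2 = K$, and $e \in K^2$ is an element with $e(1-e) \in \phi_2(Q)$ and $\phi_2(Q) + Ae = K$. Then $\phi_2(Q) + A(e + (1-e)a) = J$. -/
/-- If `J = K + Aa`, `φ₂(Q) + K² = K`, `e ∈ K²` with `e(1-e) ∈ φ₂(Q)` and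
`φ₂(Q) + Ae = K`, then `φ₂(Q) + A(e + (1-e)a) = J`. -/
theorem range_sup_span_eq (A : Type*) [CommRing A] [IsNoetherianRing A]
    (Q : Type*) [AddCommGroup Q] [Module A Q] [Module.Finite A Q]
    (K J : Ideal A) (a : A) (φ₂ : Q →ₗ[A] A)
    (hrange : LinearMap.range φ₂ ≤ (K : Submodule A A))
    (hJ : J = K ⊔ Ideal.span {a})
    (e : A) (he : e ∈ K ^ 2) (he' : e * (1 - e) ∈ LinearMap.range φ₂)
    (hK : LinearMap.range φ₂ ⊔ (Ideal.span {e} : Ideal A) = (K : Submodule A A)) :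
    LinearMap.range φ₂ ⊔ (Ideal.span {e + (1 - e) * a} : Ideal A) = (J : Submodule A A) := by
  set R := LinearMap.range φ₂ with hR
  set t := e + (1 - e) * a with ht
  have heK : e ∈ K := Ideal.pow_le_self two_ne_zero he
  have htmem : t ∈ R ⊔ (Ideal.span {t} : Ideal A) :=
    Submodule.mem_sup_right (Submodule.mem_span_singleton_self t)
  have heL : e ∈ R ⊔ (Ideal.span {t} : Ideal A) := by
    have h1 : e * (1 - e) * (1 - a) ∈ R := by
      have := Submodule.smul_mem R (1 - a) he'
      simpa [smul_eq_mul, mul_comm, mul_left_comm, mul_assoc] using this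
    have h2 : e • t ∈ (R ⊔ (Ideal.span {t} : Ideal A)) :=
      Submodule.smul_mem _ e htmem
    have : e = e * (1 - e) * (1 - a) + e • t := by
      simp only [smul_eq_mul, ht]; ring
    rw [this]
    exact Submodule.add_mem _ (Submodule.mem_sup_left h1) h2
  have hKle : (K : Submodule A A) ≤ R ⊔ (Ideal.span {t} : Ideal A) := by
    rw [← hK]
    exact sup_le le_sup_left
      ((Submodule.span_singleton_le_iff_mem _ _).mpr heL)
  have haL : a ∈ R ⊔ (Ideal.span {t} : Ideal A) := by
    have h1 : a • e ∈ R ⊔ (Ideal.span {t} : Ideal A) := Submodule.smul_mem _ a heL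
    have h2 : t - e ∈ R ⊔ (Ideal.span {t} : Ideal A) := Submodule.sub_mem _ htmem heL
    have : a = a • e + (t - e) := by simp only [smul_eq_mul, ht]; ring
    rw [this]
    exact Submodule.add_mem _ h1 h2
  apply le_antisymm
  · apply sup_le
    · exact hrange.trans (by rw [hJ]; exact le_sup_left)
    · have h1 : (1 - e) * a ∈ Ideal.span {a} :=
        Ideal.mul_mem_left _ _ (Ideal.mem_span_singleton_self a)
      have h2 : t ∈ J := by
        rw [hJ]; exact Submodule.add_mem _ (Submodule.mem_sup_left heK) (Submodule.mem_sup_right h1)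
      exact (Ideal.span_singleton_le_iff_mem _).mpr h2
  · rw [hJ]
    exact sup_le hKle ((Submodule.span_singleton_le_iff_mem _ _).mpr haL)
end

section
/- Let $B$ be a commutative Noetherian ring, $I$ an ideal of $B$, and $P$ a finitely generated projective $B$-module. Let $\sigma$ be a transvection of $P/IP$, i.e., an automorphism of the form $1 + \bar\varphi_{\bar p}$ where $\bar\varphi \in (P/IP)^*$, $\bar p \in P/IP$, $\bar\varphi(\bar p) = 0$, and $\bar\varphi$ lifts to an element of $P^*$ and $\bar p$ lifts to an element of $P$. Then $\sigma$ lifts to an automorphism of $P$. -/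
/-- A transvection `x ↦ x + g x • v` with `g v = 0` is an automorphism. -/
noncomputable def transvectionEquiv {B : Type*} [CommRing B] {P : Type*} [AddCommGroup P]
    [Module B P] (g : P →ₗ[B] B) (v : P) (hgv : g v = 0) : P ≃ₗ[B] P :=
  LinearEquiv.ofLinear (LinearMap.id + LinearMap.smulRight g v)
    (LinearMap.id - LinearMap.smulRight g v)
    (by ext x; simp [hgv, smul_smul])
    (by ext x; simp [hgv, smul_smul])

@[simp] lemma transvectionEquiv_apply {B : Type*} [CommRing B] {P : Type*} [AddCommGroup P]
    [Module B P] (g : P →ₗ[B] B) (v : P) (hgv : g v = 0) (x : P) :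
    transvectionEquiv g v hgv x = x + g x • v := rfl

/-- A transvection of `P/IP` (given by data `Φ : P →ₗ B`, `p : P` with `Φ p ∈ I`, i.e. the
reduction `φ̄` kills `p̄`, and `Φ` or `p` unimodular) lifts to an automorphism of `P`. -/
theorem transvection_lifts (B : Type*) [CommRing B] [IsNoetherianRing B] (I : Ideal B)
    (P : Type*) [AddCommGroup P] [Module B P] [Module.Projective B P] [Module.Finite B P]
    (Φ : P →ₗ[B] B) (p : P) (hΦp : Φ p ∈ I)
    (hunim : (∃ q : P, Φ q = 1) ∨ (∃ ψ : P →ₗ[B] B, ψ p = 1)) :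
    ∃ τ : P ≃ₗ[B] P, ∀ x : P,
      (I • (⊤ : Submodule B P)).mkQ (τ x) = (I • (⊤ : Submodule B P)).mkQ (x + Φ x • p) := by
  rcases hunim with ⟨q, hq⟩ | ⟨ψ, hψ⟩
  · -- replace p by p' = p - Φ p • q, so Φ p' = 0
    set p' : P := p - Φ p • q with hp'
    have h0 : Φ p' = 0 := by simp [hp', hq]
    refine ⟨transvectionEquiv Φ p' h0, fun x => ?_⟩
    rw [← sub_eq_zero, ← map_sub, Submodule.mkQ_apply, Submodule.Quotient.mk_eq_zero]
    have : x + Φ x • p' - (x + Φ x • p) = Φ x • (-(Φ p • q)) := by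
      simp [hp', smul_sub]
    rw [transvectionEquiv_apply, this]
    exact Submodule.smul_of_tower_mem _ _
      (neg_mem (Submodule.smul_mem_smul hΦp (Submodule.mem_top)))
  · -- replace Φ by Φ' = Φ - Φ p • ψ, so Φ' p = 0
    set Φ' : P →ₗ[B] B := Φ - Φ p • ψ with hΦ'
    have h0 : Φ' p = 0 := by simp [hΦ', hψ]
    refine ⟨transvectionEquiv Φ' p h0, fun x => ?_⟩
    rw [← sub_eq_zero, ← map_sub, Submodule.mkQ_apply, Submodule.Quotient.mk_eq_zero]
    have : x + Φ' x • p - (x + Φ x • p) = -(ψ x • (Φ p • p)) := by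
      simp [hΦ', sub_smul, smul_smul, mul_comm]
    rw [transvectionEquiv_apply, this]
    exact neg_mem (Submodule.smul_of_tower_mem _ _
      (Submodule.smul_mem_smul hΦp (Submodule.mem_top)))
end

section
/- Let $A$ be a commutative ring, $J$ an ideal, and $w, \tilde w : F/JF \twoheadrightarrow J/J^2$ two surjections, where $F$ is projective of rank $n$ with $F/JF$ free of rank $n$ over $A/J$ and $J/J^2$ generated by $n$ elements, with $A/J$ Artinian local (or a finite product of Artinian local rings). Then there exists a unit $\bar b \in (A/J)^\times$ and an automorphism $\theta$ of $F/JF$ of determinant $\bar b$ such that $\tilde w = w \circ \theta$. -/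
/-!
Over a field, two surjections `f g : M ↠ N` have kernels of the same dimension, so splitting both
gives an automorphism `θ` of `M` with `f ∘ θ = g`. Over a commutative ring and a maximal ideal `p`,
apply this to the reductions mod `p`, lift the resulting automorphism of `M/pM` to `M`, and
correct the lift by a map into `pM`: this gives `h : End M` with `f ∘ h = g` and `det h ∉ p`.
The solutions of `f ∘ h = g` form a coset of `Hom(M, ker f)`, so over a ring with finitely many
maximal ideals (such as an Artinian ring) the Chinese remainder theorem glues these local
solutions into one whose determinant lies in no maximal ideal, i.e. into an automorphism.
-/

open Module Submodule

theorem LinearMap.exists_linearEquiv_comp_eq_of_equiv_ker {R M N : Type*} [Ring R]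
    [AddCommGroup M] [Module R M] [AddCommGroup N] [Module R N] [Module.Projective R N]
    {f g : M →ₗ[R] N} (hf : Function.Surjective f) (hg : Function.Surjective g)
    (e : ker g ≃ₗ[R] ker f) :
    ∃ θ : M ≃ₗ[R] M, f ∘ₗ θ = g := by
  obtain ⟨sf, hsf⟩ := Module.projective_lifting_property f LinearMap.id hf
  obtain ⟨sg, hsg⟩ := Module.projective_lifting_property g LinearMap.id hg
  -- `θ : M ≃ ker g × N ≃ ker f × N ≃ M`, the outer equivalences coming from sections of `g`, `f`
  let ef := (exact_subtype_ker_map f).splitSurjectiveEquiv (ker f).injective_subtype ⟨sf, hsf⟩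
  let eg := (exact_subtype_ker_map g).splitSurjectiveEquiv (ker g).injective_subtype ⟨sg, hsg⟩
  refine ⟨eg.1.trans ((e.prodCongr (LinearEquiv.refl R N)).trans ef.1.symm), ext fun x ↦ ?_⟩
  simp only [coe_comp, LinearEquiv.coe_coe, Function.comp_apply, LinearEquiv.trans_apply]
  rw [LinearMap.congr_fun ef.2.2]
  simp [LinearMap.congr_fun eg.2.2 x]

theorem LinearMap.exists_linearEquiv_comp_eq_of_finiteDimensional {K M N : Type*}
    [DivisionRing K] [AddCommGroup M] [Module K M] [AddCommGroup N] [Module K N]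
    [FiniteDimensional K M] {f g : M →ₗ[K] N}
    (hf : Function.Surjective f) (hg : Function.Surjective g) :
    ∃ θ : M ≃ₗ[K] M, f ∘ₗ θ = g := by
  have hker : finrank K (ker g) = finrank K (ker f) := by
    have hf' := f.finrank_range_add_finrank_ker
    have hg' := g.finrank_range_add_finrank_ker
    rw [range_eq_top.2 hf, finrank_top] at hf'
    rw [range_eq_top.2 hg, finrank_top] at hg'
    omega
  exact exists_linearEquiv_comp_eq_of_equiv_ker hf hg (.ofFinrankEq _ _ hker)

section CommRing

variable {R M N : Type*} [CommRing R] [AddCommGroup M] [Module R M] [AddCommGroup N] [Module R N]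

theorem LinearMap.reduceModIdeal_surjective (I : Ideal R) {f : M →ₗ[R] N}
    (hf : Function.Surjective f) : Function.Surjective (f.reduceModIdeal I) := by
  intro y
  obtain ⟨y, rfl⟩ := mkQ_surjective _ y
  obtain ⟨x, rfl⟩ := hf y
  exact ⟨Submodule.Quotient.mk x, reduceModIdeal_apply I f x⟩

theorem LinearMap.mk_det_eq_of_mkQ_comp_eq [Module.Free R M] [Module.Finite R M] (I : Ideal R)
    {h h' : Module.End R M}
    (hh : (I • ⊤ : Submodule R M).mkQ ∘ₗ h = (I • ⊤ : Submodule R M).mkQ ∘ₗ h') :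
    Ideal.Quotient.mk I (LinearMap.det h) = Ideal.Quotient.mk I (LinearMap.det h') := by
  classical
  let b := Module.Free.chooseBasis R M
  rw [← det_toMatrix b, ← det_toMatrix b, RingHom.map_det, RingHom.map_det]
  congr 1
  ext i j
  rw [RingHom.mapMatrix_apply, RingHom.mapMatrix_apply, Matrix.map_apply, Matrix.map_apply,
    toMatrix_apply, toMatrix_apply, Ideal.Quotient.eq, ← b.coord_apply, ← b.coord_apply,
    ← map_sub]
  have hmem : h (b j) - h' (b j) ∈ (I • ⊤ : Submodule R M) :=
    (Submodule.Quotient.eq _).1 (LinearMap.congr_fun hh (b j))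
  simpa [Ideal.smul_eq_mul] using mem_comap.1 (smul_top_le_comap_smul_top I (b.coord i) hmem)

theorem LinearMap.exists_comp_eq_of_forall_mem_smul_top [Module.Projective R M] (I : Ideal R)
    {f : M →ₗ[R] N} (hf : Function.Surjective f) {φ : M →ₗ[R] N}
    (hφ : ∀ x, φ x ∈ (I • ⊤ : Submodule R N)) :
    ∃ δ : Module.End R M, (I • ⊤ : Submodule R M).mkQ ∘ₗ δ = 0 ∧ f ∘ₗ δ = φ := by
  have hfI : Function.Surjective
      (f.restrict fun _ hx ↦ mem_comap.1 (smul_top_le_comap_smul_top I f hx)) := by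
    rintro ⟨y, hy⟩
    rw [← range_eq_top.2 hf, range_eq_map, ← map_smul''] at hy
    obtain ⟨x, hx, rfl⟩ := hy
    exact ⟨⟨x, hx⟩, rfl⟩
  obtain ⟨ψ, hψ⟩ := Module.projective_lifting_property _ (φ.codRestrict _ hφ) hfI
  refine ⟨(I • ⊤ : Submodule R M).subtype ∘ₗ ψ, ?_, ?_⟩
  · ext x
    simp
  · ext x
    simpa using congr(($hψ x : N))

theorem LinearEquiv.exists_lift_isUnit_mk_det [Module.Free R M] [Module.Finite R M]
    (I : Ideal R) (θ : (M ⧸ (I • ⊤ : Submodule R M)) ≃ₗ[R ⧸ I] (M ⧸ (I • ⊤ : Submodule R M))) :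
    ∃ h : Module.End R M, (I • ⊤ : Submodule R M).mkQ ∘ₗ h =
        (θ : _ →ₗ[R ⧸ I] _).restrictScalars R ∘ₗ (I • ⊤ : Submodule R M).mkQ ∧
      IsUnit (Ideal.Quotient.mk I (LinearMap.det h)) := by
  obtain ⟨h, hh⟩ := Module.projective_lifting_property (I • ⊤ : Submodule R M).mkQ
    ((θ : _ →ₗ[R ⧸ I] _).restrictScalars R ∘ₗ (I • ⊤ : Submodule R M).mkQ) (mkQ_surjective _)
  obtain ⟨h', hh'⟩ := Module.projective_lifting_property (I • ⊤ : Submodule R M).mkQ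
    ((θ.symm : _ →ₗ[R ⧸ I] _).restrictScalars R ∘ₗ (I • ⊤ : Submodule R M).mkQ)
    (mkQ_surjective _)
  refine ⟨h, hh, IsUnit.of_mul_eq_one (Ideal.Quotient.mk I (LinearMap.det h')) ?_⟩
  rw [← map_mul, ← LinearMap.det_comp, ← map_one (Ideal.Quotient.mk I),
    ← LinearMap.det_id (M := M)]
  refine LinearMap.mk_det_eq_of_mkQ_comp_eq I ?_
  ext x
  simp [← LinearMap.comp_apply (I • ⊤ : Submodule R M).mkQ, hh, hh']

theorem LinearMap.exists_comp_eq_det_notMem [Module.Free R M] [Module.Finite R M]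
    (p : Ideal R) [p.IsMaximal] {f g : M →ₗ[R] N}
    (hf : Function.Surjective f) (hg : Function.Surjective g) :
    ∃ h : Module.End R M, f ∘ₗ h = g ∧ LinearMap.det h ∉ p := by
  let := Ideal.Quotient.field p
  have : FiniteDimensional (R ⧸ p) (M ⧸ (p • ⊤ : Submodule R M)) :=
    Module.Finite.of_restrictScalars_finite R _ _
  obtain ⟨θ, hθ⟩ := exists_linearEquiv_comp_eq_of_finiteDimensional
    (f.reduceModIdeal_surjective p hf) (g.reduceModIdeal_surjective p hg)
  obtain ⟨h₁, hh₁, hdet⟩ := θ.exists_lift_isUnit_mk_det p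
  obtain ⟨δ, hδ, hfδ⟩ := exists_comp_eq_of_forall_mem_smul_top p hf
    (φ := f ∘ₗ h₁ - g) fun x ↦ by
      rw [sub_apply, ← Submodule.Quotient.eq, comp_apply,
        ← reduceModIdeal_apply p f (h₁ x), ← reduceModIdeal_apply p g x, ← hθ]
      exact congr(reduceModIdeal p f $(LinearMap.congr_fun hh₁ x))
  refine ⟨h₁ - δ, by rw [comp_sub, hfδ, sub_sub_cancel], fun hmem ↦ ?_⟩
  rw [← Ideal.Quotient.eq_zero_iff_mem,
    mk_det_eq_of_mkQ_comp_eq p (h' := h₁) (by rw [comp_sub, hδ, sub_zero])] at hmem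
  exact hdet.ne_zero hmem

theorem MaximalSpectrum.exists_sub_ite_mem [Finite (MaximalSpectrum R)]
    [DecidableEq (MaximalSpectrum R)] (p : MaximalSpectrum R) :
    ∃ e : R, ∀ q : MaximalSpectrum R, e - (if p = q then 1 else 0) ∈ q.asIdeal := by
  obtain ⟨x, hx⟩ := Ideal.quotientInfToPiQuotient_surj
    (fun _ _ h ↦ MaximalSpectrum.isCoprime_of_ne h) (Pi.single p 1)
  obtain ⟨e, rfl⟩ := Ideal.Quotient.mk_surjective x
  refine ⟨e, fun q ↦ ?_⟩
  rw [← Ideal.Quotient.eq, ← Ideal.quotientInfToPiQuotient_mk', hx]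
  split_ifs with hpq
  · subst hpq
    simp
  · simp [Ne.symm hpq]

theorem LinearMap.exists_comp_eq_isUnit_det [Finite (MaximalSpectrum R)] [Module.Free R M]
    [Module.Finite R M] {f g : M →ₗ[R] N} (hf : Function.Surjective f)
    (hloc : ∀ p : MaximalSpectrum R, ∃ h : Module.End R M, f ∘ₗ h = g ∧
      LinearMap.det h ∉ p.asIdeal) :
    ∃ h : Module.End R M, f ∘ₗ h = g ∧ IsUnit (LinearMap.det h) := by
  classical
  have := Fintype.ofFinite (MaximalSpectrum R)
  choose hp hfhp hdet using hloc
  choose e he using MaximalSpectrum.exists_sub_ite_mem (R := R)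
  obtain ⟨h₀, hh₀⟩ := Module.projective_lifting_property f g hf
  let h := h₀ + ∑ q, e q • (hp q - h₀)
  refine ⟨h, ext fun x ↦ ?_, ?_⟩
  · have hfhp' q : f (hp q x) = g x := LinearMap.congr_fun (hfhp q) x
    have hh₀' : f (h₀ x) = g x := LinearMap.congr_fun hh₀ x
    simp [h, hfhp', hh₀']
  by_contra hu
  obtain ⟨p, hpmax, hdp⟩ := exists_max_ideal_of_mem_nonunits hu
  apply hdet ⟨p, hpmax⟩
  rw [← Ideal.Quotient.eq_zero_iff_mem, ← mk_det_eq_of_mkQ_comp_eq (h := h),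
    Ideal.Quotient.eq_zero_iff_mem]
  · exact hdp
  ext x
  have hsub : h x - hp ⟨p, hpmax⟩ x =
      ∑ q, (e q - if q = ⟨p, hpmax⟩ then 1 else 0) • (hp q x - h₀ x) := by
    simp only [h, add_apply, coe_sum, coe_smul, Finset.sum_apply, Pi.smul_apply, sub_apply,
      sub_smul, ite_smul, one_smul, zero_smul, Finset.sum_sub_distrib, Finset.sum_ite_eq',
      Finset.mem_univ, ↓reduceIte]
    abel
  simp only [comp_apply, mkQ_apply, Submodule.Quotient.eq, hsub]
  exact sum_mem fun q _ ↦ smul_mem_smul (he q ⟨p, hpmax⟩) mem_top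

theorem LinearMap.exists_linearEquiv_comp_eq_of_isArtinianRing [IsArtinianRing R]
    [Module.Free R M] [Module.Finite R M] {f g : M →ₗ[R] N}
    (hf : Function.Surjective f) (hg : Function.Surjective g) :
    ∃ θ : M ≃ₗ[R] M, f ∘ₗ θ = g := by
  obtain ⟨h, hfh, hdet⟩ :=
    exists_comp_eq_isUnit_det hf fun p ↦ exists_comp_eq_det_notMem p.asIdeal hf hg
  exact ⟨.ofBijective h ((Module.End.isUnit_iff h).1 ((isUnit_iff_isUnit_det h).2 hdet)), hfh⟩

end CommRing

theorem surjections_differ_by_automorphism_general (A : Type*) [CommRing A]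
    (J : Ideal A) [IsArtinianRing (A ⧸ J)]
    (F : Type*) [AddCommGroup F] [Module A F]
    (n : ℕ) (bas : Module.Basis (Fin n) (A ⧸ J) (F ⧸ (J • (⊤ : Submodule A F))))
    (w wt : (F ⧸ (J • (⊤ : Submodule A F))) →ₗ[A ⧸ J] J.Cotangent)
    (hw : Function.Surjective w) (hwt : Function.Surjective wt) :
    ∃ (b : (A ⧸ J)ˣ) (θ : (F ⧸ (J • (⊤ : Submodule A F))) ≃ₗ[A ⧸ J]
        (F ⧸ (J • (⊤ : Submodule A F)))),
      LinearMap.det θ.toLinearMap = (b : A ⧸ J) ∧ ∀ x, wt x = w (θ x) := by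
  have := Module.Free.of_basis bas
  have := Module.Finite.of_basis bas
  obtain ⟨θ, hθ⟩ := LinearMap.exists_linearEquiv_comp_eq_of_isArtinianRing hw hwt
  exact ⟨θ.isUnit_det'.unit, θ, rfl, fun x ↦ by rw [← hθ]; rfl⟩

/-- Over the Artinian ring `A/J`, any two surjections `w, wt : F/JF ↠ J/J²` from the free
rank-`n` module `F/JF` onto the `n`-generated module `J/J²` differ by an automorphism `θ`
of `F/JF`, whose determinant is a unit `b̄`. -/
theorem surjections_differ_by_automorphism (A : Type*) [CommRing A] [IsNoetherianRing A]
    (J : Ideal A) [IsArtinianRing (A ⧸ J)]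
    (F : Type*) [AddCommGroup F] [Module A F] [Module.Projective A F] [Module.Finite A F]
    (n : ℕ) (bas : Module.Basis (Fin n) (A ⧸ J) (F ⧸ (J • (⊤ : Submodule A F))))
    (hgen : ∃ s : Fin n → J.Cotangent, Submodule.span (A ⧸ J) (Set.range s) = ⊤)
    (w wt : (F ⧸ (J • (⊤ : Submodule A F))) →ₗ[A ⧸ J] J.Cotangent)
    (hw : Function.Surjective w) (hwt : Function.Surjective wt) :
    ∃ (b : (A ⧸ J)ˣ) (θ : (F ⧸ (J • (⊤ : Submodule A F))) ≃ₗ[A ⧸ J]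
        (F ⧸ (J • (⊤ : Submodule A F)))),
      LinearMap.det θ.toLinearMap = (b : A ⧸ J) ∧ ∀ x, wt x = w (θ x) :=
  surjections_differ_by_automorphism_general A J F n bas w wt hw hwt
end

section
/- Let $A$ be a commutative Noetherian ring, $F$ a finitely generated projective $A$-module, and $J_1, J_2$ comaximal ideals of $A$. Given surjections $\Phi : F \twoheadrightarrow J_1/J_1^2$ and $\Psi : F \twoheadrightarrow J_2/J_2^2$, there exists a single $A$-linear map $\Theta : F \to J_1 \cap J_2$ inducing both, i.e., $\Theta$ composed with $(J_1\cap J_2) \to J_1/J_1^2$ equals $\Phi$ and with $(J_1 \cap J_2) \to J_2/J_2^2$ equals $\Psi$, and $\Theta(F) + (J_1\cap J_2)^2 = J_1 \cap J_2$. -/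
/-- Given surjections `Φ : F ↠ J₁/J₁²` and `Ψ : F ↠ J₂/J₂²` with `J₁ + J₂ = A`, there is a
single linear map `Θ : F → J₁ ∩ J₂` inducing both, and `Θ(F) + (J₁∩J₂)² = J₁∩J₂`. -/
theorem exists_common_lift (A : Type*) [CommRing A] [IsNoetherianRing A]
    (F : Type*) [AddCommGroup F] [Module A F] [Module.Projective A F] [Module.Finite A F]
    (J₁ J₂ : Ideal A) (hcom : J₁ ⊔ J₂ = ⊤)
    (Φ : F →ₗ[A] J₁.Cotangent) (hΦ : Function.Surjective Φ)
    (Ψ : F →ₗ[A] J₂.Cotangent) (hΨ : Function.Surjective Ψ) :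
    ∃ Θ : F →ₗ[A] (J₁ ⊓ J₂ : Ideal A),
      (∀ x : F, J₁.toCotangent ⟨(Θ x : A), (Submodule.mem_inf.mp (Θ x).2).1⟩ = Φ x) ∧
      (∀ x : F, J₂.toCotangent ⟨(Θ x : A), (Submodule.mem_inf.mp (Θ x).2).2⟩ = Ψ x) ∧
      LinearMap.range ((J₁ ⊓ J₂ : Ideal A).subtype ∘ₗ Θ) ⊔
        (((J₁ ⊓ J₂) ^ 2 : Ideal A) : Submodule A A) = ((J₁ ⊓ J₂ : Ideal A) : Submodule A A) := by
  have hcop : IsCoprime J₁ J₂ := (Ideal.isCoprime_iff_sup_eq).mpr hcom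
  have hsup2 : J₁ ^ 2 ⊔ J₂ ^ 2 = ⊤ :=
    Ideal.isCoprime_iff_sup_eq.mp (hcop.pow)
  obtain ⟨e, he, f, hf, hef⟩ :=
    Submodule.mem_sup.mp (by rw [hsup2]; exact Submodule.mem_top : (1 : A) ∈ J₁ ^ 2 ⊔ J₂ ^ 2)
  have he1 : e ∈ J₁ := Ideal.pow_le_self two_ne_zero he
  have hf2 : f ∈ J₂ := Ideal.pow_le_self two_ne_zero hf
  -- the projection from J₁ ⊓ J₂ to the product of cotangents
  set π : (J₁ ⊓ J₂ : Ideal A) →ₗ[A] J₁.Cotangent × J₂.Cotangent :=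
    LinearMap.prod (J₁.toCotangent ∘ₗ Submodule.inclusion inf_le_left)
      (J₂.toCotangent ∘ₗ Submodule.inclusion inf_le_right) with hπdef
  have hπ : Function.Surjective π := by
    rintro ⟨c₁, c₂⟩
    obtain ⟨a₁, rfl⟩ := J₁.toCotangent_surjective c₁
    obtain ⟨a₂, rfl⟩ := J₂.toCotangent_surjective c₂
    have hx1 : f * (a₁ : A) + e * (a₂ : A) ∈ J₁ :=
      J₁.add_mem (J₁.mul_mem_left f a₁.2) (J₁.mul_mem_right _ he1)
    have hx2 : f * (a₁ : A) + e * (a₂ : A) ∈ J₂ :=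
      J₂.add_mem (J₂.mul_mem_right _ hf2) (J₂.mul_mem_left e a₂.2)
    refine ⟨⟨f * (a₁ : A) + e * (a₂ : A), Submodule.mem_inf.mpr ⟨hx1, hx2⟩⟩, ?_⟩
    refine Prod.ext ?_ ?_
    · show J₁.toCotangent _ = J₁.toCotangent a₁
      rw [Ideal.toCotangent_eq]
      have : (f * (a₁ : A) + e * (a₂ : A)) - a₁ = e * a₂ - e * a₁ := by
        have : f = 1 - e := by linear_combination hef
        rw [this]; ring
      show (f * (a₁ : A) + e * (a₂ : A)) - a₁ ∈ J₁ ^ 2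
      rw [this]
      exact sub_mem (Ideal.mul_mem_right _ _ he) (Ideal.mul_mem_right _ _ he)
    · show J₂.toCotangent _ = J₂.toCotangent a₂
      rw [Ideal.toCotangent_eq]
      have : (f * (a₁ : A) + e * (a₂ : A)) - a₂ = f * a₁ - f * a₂ := by
        have : e = 1 - f := by linear_combination hef
        rw [this]; ring
      show (f * (a₁ : A) + e * (a₂ : A)) - a₂ ∈ J₂ ^ 2
      rw [this]
      exact sub_mem (Ideal.mul_mem_right _ _ hf) (Ideal.mul_mem_right _ _ hf)
  -- the product map is surjective
  have hsurjP : Function.Surjective (Φ.prod Ψ) := by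
    rintro ⟨c₁, c₂⟩
    obtain ⟨u, hu⟩ := hΦ c₁
    obtain ⟨v, hv⟩ := hΨ c₂
    refine ⟨f • u + e • v, Prod.ext ?_ ?_⟩
    · show Φ (f • u + e • v) = c₁
      rw [map_add, map_smul, map_smul, hu,
        Ideal.Cotangent.smul_eq_zero_of_mem he1, add_zero]
      have : f = 1 - e := by linear_combination hef
      rw [this, sub_smul, one_smul, Ideal.Cotangent.smul_eq_zero_of_mem he1, sub_zero]
    · show Ψ (f • u + e • v) = c₂
      rw [map_add, map_smul, map_smul, hv,
        Ideal.Cotangent.smul_eq_zero_of_mem hf2, zero_add]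
      have : e = 1 - f := by linear_combination hef
      rw [this, sub_smul, one_smul, Ideal.Cotangent.smul_eq_zero_of_mem hf2, sub_zero]
  obtain ⟨Θ, hΘ⟩ := Module.projective_lifting_property π (Φ.prod Ψ) hπ
  have hΘ1 : ∀ x : F, J₁.toCotangent ⟨(Θ x : A), (Submodule.mem_inf.mp (Θ x).2).1⟩ = Φ x :=
    fun x => congrArg Prod.fst (LinearMap.congr_fun hΘ x)
  have hΘ2 : ∀ x : F, J₂.toCotangent ⟨(Θ x : A), (Submodule.mem_inf.mp (Θ x).2).2⟩ = Ψ x :=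
    fun x => congrArg Prod.snd (LinearMap.congr_fun hΘ x)
  refine ⟨Θ, hΘ1, hΘ2, le_antisymm (sup_le ?_ ?_) ?_⟩
  · rintro _ ⟨y, rfl⟩
    exact (Θ y).2
  · exact Ideal.pow_le_self two_ne_zero
  · intro x hx
    obtain ⟨y, hy⟩ := hsurjP (π ⟨x, hx⟩)
    have hyx : π (Θ y) = π ⟨x, hx⟩ := (LinearMap.congr_fun hΘ y).trans hy
    have h1 : ((Θ y : A) - x) ∈ J₁ ^ 2 := by
      have := congrArg Prod.fst hyx
      exact (Ideal.toCotangent_eq _).mp this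
    have h2 : ((Θ y : A) - x) ∈ J₂ ^ 2 := by
      have := congrArg Prod.snd hyx
      exact (Ideal.toCotangent_eq _).mp this
    have hmem : x - (Θ y : A) ∈ (J₁ ⊓ J₂) ^ 2 := by
      have hin : x - (Θ y : A) ∈ J₁ ^ 2 ⊓ J₂ ^ 2 := by
        rw [← neg_sub]
        exact ⟨neg_mem h1, neg_mem h2⟩
      have heq : J₁ ^ 2 ⊓ J₂ ^ 2 = J₁ ^ 2 * J₂ ^ 2 :=
        Ideal.inf_eq_mul_of_isCoprime hcop.pow
      have hle : J₁ ^ 2 * J₂ ^ 2 ≤ (J₁ ⊓ J₂) ^ 2 := by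
        rw [← mul_pow]
        exact Ideal.pow_right_mono Ideal.mul_le_inf 2
      exact hle (heq ▸ hin)
    refine Submodule.mem_sup.mpr ⟨(Θ y : A), ⟨y, rfl⟩, x - (Θ y : A), hmem, by ring⟩
end
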